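/- Let M₁, M₂, N₁, N₂ be positive integers with N := N₁·N₂ = M₁·M₂, and let F : Matrix (Fin N₁ × Fin N₂) (Fin M₁ × Fin M₂) ℂ be the quantum Fourier transform, F (j,k) (l,m) = exp(2πi·(j·N₂ + k)·(l·M₂ + m)/N)/√N. Then the operator-Schmidt number of F is maximal: the rank of the realignment F^R : Matrix (Fin N₁ × Fin M₁) (Fin N₂ × Fin M₂) ℂ, F^R (j,l) (k,m) = F (j,k) (l,m), equals min(M₁·N₁, M₂·N₂). -/
import Mathlib


open Matrix Complex

/-- The quantum Fourier transform `𝓕_{M₁M₂ → N₁N₂}` as a matrix, with `N = N₁N₂ = M₁M₂`. -/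
noncomputable def QFT (M₁ M₂ N₁ N₂ : ℕ) : Matrix (Fin N₁ × Fin N₂) (Fin M₁ × Fin M₂) ℂ :=
  fun p q => Complex.exp (2 * Real.pi * Complex.I *
      (((p.1.val : ℂ) * N₂ + p.2.val) * ((q.1.val : ℂ) * M₂ + q.2.val)) / (N₁ * N₂)) /
    Real.sqrt (N₁ * N₂)

/-- The realignment `M^R (i,k) (j,l) = M (i,j) (k,l)`; its rank is the operator-Schmidt
number. -/
def realign {I J K L : Type*} (M : Matrix (I × J) (K × L) ℂ) : Matrix (I × K) (J × L) ℂ :=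
  fun p q => M (p.1, q.1) (p.2, q.2)

lemma rank_submatrix_le'' {m n m' n' : Type*} [Fintype m] [Fintype n] [Fintype m'] [Fintype n']
    [DecidableEq m] [DecidableEq n] [DecidableEq m'] [DecidableEq n']
    (A : Matrix m n ℂ) (f : m' → m) (g : n' → n) :
    (A.submatrix f g).rank ≤ A.rank := by
  have h : A.submatrix f g =
      (Matrix.of fun i j => if f i = j then (1:ℂ) else 0) * A *
      (Matrix.of fun i j => if i = g j then (1:ℂ) else 0) := by
    ext i j
    simp [Matrix.mul_apply, ite_mul, mul_ite, Finset.sum_ite_eq, Finset.sum_ite_eq']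
  rw [h]
  exact (Matrix.rank_mul_le_left _ _).trans (Matrix.rank_mul_le_right _ _)

lemma pow_mul_mod' {ζ : ℂ} {n : ℕ} (h : ζ ^ n = 1) (j x : ℕ) :
    ζ ^ (j * (x % n)) = ζ ^ (j * x) := by
  conv_rhs => rw [← Nat.div_add_mod x n]
  rw [Nat.mul_add, pow_add, show j * (n * (x / n)) = n * (j * (x / n)) by ring,
    pow_mul ζ n, h, one_pow, one_mul]

/-- The operator-Schmidt number of the quantum Fourier transform is maximal. -/
theorem stmt_14 (M₁ M₂ N₁ N₂ : ℕ) (hM₁ : 0 < M₁) (hM₂ : 0 < M₂) (hN₁ : 0 < N₁)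
    (hN₂ : 0 < N₂) (hN : N₁ * N₂ = M₁ * M₂) :
    (realign (QFT M₁ M₂ N₁ N₂)).rank = min (M₁ * N₁) (M₂ * N₂) := by
  have hM₁' : (M₁ : ℂ) ≠ 0 := Nat.cast_ne_zero.mpr hM₁.ne'
  have hM₂' : (M₂ : ℂ) ≠ 0 := Nat.cast_ne_zero.mpr hM₂.ne'
  have hN₁' : (N₁ : ℂ) ≠ 0 := Nat.cast_ne_zero.mpr hN₁.ne'
  have hN₂' : (N₂ : ℂ) ≠ 0 := Nat.cast_ne_zero.mpr hN₂.ne'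
  have hNC : (N₁ : ℂ) * N₂ = (M₁ : ℂ) * M₂ := by exact_mod_cast hN
  have hsq : ((Real.sqrt ((N₁ : ℝ) * N₂) : ℝ) : ℂ) ≠ 0 := by
    have : (0 : ℝ) < Real.sqrt ((N₁ : ℝ) * N₂) := Real.sqrt_pos.mpr (by positivity)
    exact_mod_cast this.ne'
  set r₁ := min N₁ M₂ with hr₁
  set r₂ := min M₁ N₂ with hr₂
  set ζ₁ : ℂ := Complex.exp (2 * Real.pi * Complex.I / N₁) with hζ₁
  set ζ₂ : ℂ := Complex.exp (2 * Real.pi * Complex.I / M₁) with hζ₂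
  have hprim₁ : IsPrimitiveRoot ζ₁ N₁ := Complex.isPrimitiveRoot_exp N₁ hN₁.ne'
  have hprim₂ : IsPrimitiveRoot ζ₂ M₁ := Complex.isPrimitiveRoot_exp M₁ hM₁.ne'
  set G : Matrix (Fin N₁ × Fin M₁) (Fin N₂ × Fin M₂) ℂ :=
    Matrix.of (fun p q => ζ₁ ^ (p.1.val * q.2.val) * ζ₂ ^ (p.2.val * q.1.val)) with hG
  -- rewrite the two roots with common denominator N₁ * N₂
  have hζ₁' : ζ₁ = Complex.exp (2 * Real.pi * Complex.I * N₂ / (N₁ * N₂)) := by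
    rw [hζ₁]; congr 1; field_simp
  have hζ₂' : ζ₂ = Complex.exp (2 * Real.pi * Complex.I * M₂ / (N₁ * N₂)) := by
    rw [hζ₂, hNC]; congr 1; field_simp
  -- Step 1: realign (QFT) = D₁ * G * D₂ with invertible diagonal D₁, D₂
  have key : realign (QFT M₁ M₂ N₁ N₂) =
      Matrix.diagonal (fun p : Fin N₁ × Fin M₁ =>
        Complex.exp (2 * Real.pi * Complex.I * (N₂ * M₂ * p.1.val * p.2.val) / (N₁ * N₂)) /
          Real.sqrt ((N₁ : ℝ) * N₂)) * G *
      Matrix.diagonal (fun q : Fin N₂ × Fin M₂ =>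
        Complex.exp (2 * Real.pi * Complex.I * (q.1.val * q.2.val) / (N₁ * N₂))) := by
    ext ⟨j, l⟩ ⟨k, m⟩
    rw [Matrix.mul_diagonal, Matrix.diagonal_mul]
    show Complex.exp _ / _ = _
    rw [hG]
    simp only [Matrix.of_apply]
    rw [hζ₁', hζ₂', ← Complex.exp_nat_mul, ← Complex.exp_nat_mul, ← Complex.exp_add,
      div_mul_eq_mul_div, div_mul_eq_mul_div, ← Complex.exp_add, ← Complex.exp_add]
    congr 2
    push_cast
    field_simp
    ring
  rw [key]
  have hd₂ : IsUnit (Matrix.diagonal (fun q : Fin N₂ × Fin M₂ =>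
      Complex.exp (2 * Real.pi * Complex.I * (q.1.val * q.2.val) / (N₁ * N₂)))).det := by
    rw [Matrix.det_diagonal]
    exact isUnit_iff_ne_zero.mpr (Finset.prod_ne_zero_iff.mpr fun q _ => Complex.exp_ne_zero _)
  have hd₁ : IsUnit (Matrix.diagonal (fun p : Fin N₁ × Fin M₁ =>
      Complex.exp (2 * Real.pi * Complex.I * (N₂ * M₂ * p.1.val * p.2.val) / (N₁ * N₂)) /
        Real.sqrt ((N₁ : ℝ) * N₂))).det := by
    rw [Matrix.det_diagonal]
    refine isUnit_iff_ne_zero.mpr (Finset.prod_ne_zero_iff.mpr fun p _ => ?_)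
    exact div_ne_zero (Complex.exp_ne_zero _) hsq
  rw [Matrix.rank_mul_eq_left_of_isUnit_det _ _ hd₂,
    Matrix.rank_mul_eq_right_of_isUnit_det _ _ hd₁]
  -- Step 2: upper bound rank G ≤ r₁ * r₂
  have hr₁N : r₁ ≤ N₁ := min_le_left _ _
  have hr₁M : r₁ ≤ M₂ := min_le_right _ _
  have hr₂M : r₂ ≤ M₁ := min_le_left _ _
  have hr₂N : r₂ ≤ N₂ := min_le_right _ _
  have he₁ : ∀ m : Fin M₂, (m : ℕ) % N₁ < r₁ := fun m =>
    lt_min (Nat.mod_lt _ hN₁) (lt_of_le_of_lt (Nat.mod_le _ _) m.isLt)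
  have he₂ : ∀ k : Fin N₂, (k : ℕ) % M₁ < r₂ := fun k =>
    lt_min (Nat.mod_lt _ hM₁) (lt_of_le_of_lt (Nat.mod_le _ _) k.isLt)
  set G₁ : Matrix (Fin N₁ × Fin M₁) (Fin r₁ × Fin r₂) ℂ :=
    Matrix.of (fun p a => ζ₁ ^ (p.1.val * a.1.val) * ζ₂ ^ (p.2.val * a.2.val)) with hG₁
  set G₂ : Matrix (Fin r₁ × Fin r₂) (Fin N₂ × Fin M₂) ℂ :=
    Matrix.of (fun a q =>
      if a = (⟨q.2.val % N₁, he₁ q.2⟩, ⟨q.1.val % M₁, he₂ q.1⟩) then (1 : ℂ) else 0) with hG₂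
  have hfact : G = G₁ * G₂ := by
    ext ⟨j, l⟩ ⟨k, m⟩
    rw [Matrix.mul_apply]
    simp only [hG₁, hG₂, Matrix.of_apply, mul_ite, mul_one, mul_zero]
    rw [Finset.sum_ite_eq' Finset.univ
      ((⟨(m : ℕ) % N₁, he₁ m⟩, ⟨(k : ℕ) % M₁, he₂ k⟩) : Fin r₁ × Fin r₂)]
    simp only [Finset.mem_univ, if_true, hG, Matrix.of_apply]
    rw [pow_mul_mod' (hprim₁.pow_eq_one) j m, pow_mul_mod' (hprim₂.pow_eq_one) l k]
  have hupper : G.rank ≤ r₁ * r₂ := by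
    rw [hfact]
    refine (Matrix.rank_mul_le_left _ _).trans ?_
    simpa using Matrix.rank_le_card_width G₁
  -- Step 3: lower bound via an invertible (r₁*r₂) × (r₁*r₂) submatrix
  set V₁ : Matrix (Fin r₁) (Fin r₁) ℂ := Matrix.vandermonde (fun a => ζ₁ ^ (a : ℕ)) with hV₁
  set V₂ : Matrix (Fin r₂) (Fin r₂) ℂ := Matrix.vandermonde (fun b => ζ₂ ^ (b : ℕ)) with hV₂
  have hdV₁ : V₁.det ≠ 0 := by
    rw [hV₁, Matrix.det_vandermonde_ne_zero_iff]
    intro a a' h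
    exact Fin.ext (hprim₁.pow_inj (lt_of_lt_of_le a.isLt hr₁N)
      (lt_of_lt_of_le a'.isLt hr₁N) h)
  have hdV₂ : V₂.det ≠ 0 := by
    rw [hV₂, Matrix.det_vandermonde_ne_zero_iff]
    intro b b' h
    exact Fin.ext (hprim₂.pow_inj (lt_of_lt_of_le b.isLt hr₂M)
      (lt_of_lt_of_le b'.isLt hr₂M) h)
  have hsub : G.submatrix
      (fun a : Fin r₁ × Fin r₂ => ((Fin.castLE hr₁N a.1, Fin.castLE hr₂M a.2) :
        Fin N₁ × Fin M₁))
      (fun a : Fin r₁ × Fin r₂ => ((Fin.castLE hr₂N a.2, Fin.castLE hr₁M a.1) :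
        Fin N₂ × Fin M₂)) = Matrix.kroneckerMap (· * ·) V₁ V₂ := by
    ext ⟨a, b⟩ ⟨a', b'⟩
    simp only [Matrix.submatrix_apply, hG, Matrix.of_apply, Matrix.kroneckerMap_apply,
      hV₁, hV₂, Matrix.vandermonde_apply, Fin.coe_castLE]
    rw [← pow_mul, ← pow_mul]
  have hlower : r₁ * r₂ ≤ G.rank := by
    have hrank : (Matrix.kroneckerMap (· * ·) V₁ V₂).rank = r₁ * r₂ := by
      rw [Matrix.rank_of_isUnit]
      · simp [Fintype.card_prod]
      · rw [Matrix.isUnit_iff_isUnit_det, Matrix.det_kronecker]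
        exact isUnit_iff_ne_zero.mpr (mul_ne_zero (pow_ne_zero _ hdV₁) (pow_ne_zero _ hdV₂))
    calc r₁ * r₂ = (Matrix.kroneckerMap (· * ·) V₁ V₂).rank := hrank.symm
      _ ≤ G.rank := hsub ▸ rank_submatrix_le'' G _ _
  -- Step 4: arithmetic
  have harith : r₁ * r₂ = min (M₁ * N₁) (M₂ * N₂) := by
    rw [hr₁, hr₂]
    rcases le_total N₁ M₂ with h | h
    · have h2 : M₁ ≤ N₂ := by
        have : M₁ * M₂ ≤ N₂ * M₂ := by
          rw [← hN]; exact Nat.mul_le_mul_right N₂ h |>.trans_eq (Nat.mul_comm _ _)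
        exact Nat.le_of_mul_le_mul_right this hM₂
      have h3 : M₁ * N₁ ≤ M₂ * N₂ := by
        calc M₁ * N₁ ≤ N₂ * M₂ := Nat.mul_le_mul h2 h
          _ = M₂ * N₂ := Nat.mul_comm _ _
      rw [min_eq_left h, min_eq_left h2, min_eq_left h3, Nat.mul_comm]
    · have h2 : N₂ ≤ M₁ := by
        have : N₂ * M₂ ≤ M₁ * M₂ := by
          rw [← hN]
          calc N₂ * M₂ ≤ N₂ * N₁ := Nat.mul_le_mul_left N₂ h
            _ = N₁ * N₂ := Nat.mul_comm _ _
        exact Nat.le_of_mul_le_mul_right this hM₂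
      have h3 : M₂ * N₂ ≤ M₁ * N₁ := by
        calc M₂ * N₂ = N₂ * M₂ := Nat.mul_comm _ _
          _ ≤ M₁ * N₁ := Nat.mul_le_mul h2 h
      rw [min_eq_right h, min_eq_right h2, min_eq_right h3]
  rw [← harith]
  exact le_antisymm hupper hlower
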